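/- arXiv:2102.00941 — 8 statements merged into one kernel-verified Lean document; each statement's English description precedes it below -/
import Mathlib

section
/- Let m be a positive integer and let R be a finite nonempty subset of ℝ^m. For any finite nonempty sets A ⊆ B ⊆ ℝ^m and any point y ∈ ℝ^m, IGD(A, R) − IGD(A ∪ {y}, R) ≥ IGD(B, R) − IGD(B ∪ {y}, R). In other words, the minus IGD indicator is a submodular set function. (Submodularity part of Theorem 1.) -/
/-- The Euclidean distance on `ℝ^m`. -/
noncomputable def euclDist {m : ℕ} (s r : Fin m → ℝ) : ℝ :=
  Real.sqrt (∑ i, (s i - r i) ^ 2)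

/-- The IGD indicator of a nonempty finite solution set `S` with respect to a
reference set `R`. -/
noncomputable def IGD {m : ℕ} (S : Finset (Fin m → ℝ)) (hS : S.Nonempty)
    (R : Finset (Fin m → ℝ)) : ℝ :=
  (1 / (R.card : ℝ)) * ∑ r ∈ R, S.inf' hS (fun s => euclDist s r)

lemma key_min (a b d : ℝ) (h : b ≤ a) : b - min d b ≤ a - min d a := by
  rcases le_total d b with h1 | h1 <;> rcases le_total d a with h2 | h2 <;>
    simp [min_eq_left, min_eq_right, *] <;> linarith

/-- Submodularity part of Theorem 1: for `A ⊆ B` and any `y`,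
`IGD(A,R) − IGD(A ∪ {y},R) ≥ IGD(B,R) − IGD(B ∪ {y},R)`,
i.e. the minus IGD indicator is a submodular set function. -/
theorem igd_submodular (m : ℕ) (hm : 0 < m)
    (R : Finset (Fin m → ℝ)) (hR : R.Nonempty)
    (A B : Finset (Fin m → ℝ)) (hA : A.Nonempty) (hB : B.Nonempty)
    (hAB : A ⊆ B) (y : Fin m → ℝ) :
    IGD A hA R - IGD (insert y A) (Finset.insert_nonempty y A) R ≥
      IGD B hB R - IGD (insert y B) (Finset.insert_nonempty y B) R := by
  simp only [IGD, ← mul_sub, ← Finset.sum_sub_distrib, ge_iff_le]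
  apply mul_le_mul_of_nonneg_left _ (by positivity)
  apply Finset.sum_le_sum
  intro r _
  rw [Finset.inf'_insert, Finset.inf'_insert]
  have hmono : B.inf' hB (fun s => euclDist s r) ≤ A.inf' hA (fun s => euclDist s r) := by
    apply Finset.inf'_mono _ hAB
  simpa using key_min _ _ (euclDist y r) hmono
end

section
/- Let m be a positive integer and let R be a finite nonempty subset of ℝ^m. For any finite nonempty sets A ⊆ B ⊆ ℝ^m and any point y ∈ ℝ^m, IGD⁺(A, R) − IGD⁺(A ∪ {y}, R) ≥ IGD⁺(B, R) − IGD⁺(B ∪ {y}, R). In other words, the minus IGD+ indicator is a submodular set function. (Submodularity part of Theorem 2.) -/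
/-- The IGD+ distance `D⁺(s,r) = √(Σᵢ (max{0, sᵢ − rᵢ})²)` on `ℝ^m`. -/
noncomputable def Dplus {m : ℕ} (s r : Fin m → ℝ) : ℝ :=
  Real.sqrt (∑ i, (max 0 (s i - r i)) ^ 2)

/-- The IGD+ indicator of a nonempty finite solution set `S` with respect to a
reference set `R`. -/
noncomputable def IGDplus {m : ℕ} (S : Finset (Fin m → ℝ)) (hS : S.Nonempty)
    (R : Finset (Fin m → ℝ)) : ℝ :=
  (1 / (R.card : ℝ)) * ∑ r ∈ R, S.inf' hS (fun s => Dplus s r)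

/-- Submodularity part of Theorem 2: for `A ⊆ B` and any `y`,
`IGD⁺(A,R) − IGD⁺(A ∪ {y},R) ≥ IGD⁺(B,R) − IGD⁺(B ∪ {y},R)`,
i.e. the minus IGD+ indicator is a submodular set function. -/
theorem igdplus_submodular (m : ℕ) (hm : 0 < m)
    (R : Finset (Fin m → ℝ)) (hR : R.Nonempty)
    (A B : Finset (Fin m → ℝ)) (hA : A.Nonempty) (hB : B.Nonempty)
    (hAB : A ⊆ B) (y : Fin m → ℝ) :
    IGDplus A hA R - IGDplus (insert y A) (Finset.insert_nonempty y A) R ≥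
      IGDplus B hB R - IGDplus (insert y B) (Finset.insert_nonempty y B) R := by
  unfold IGDplus
  rw [← mul_sub, ← mul_sub, ← Finset.sum_sub_distrib, ← Finset.sum_sub_distrib]
  apply mul_le_mul_of_nonneg_left _ (by positivity)
  apply Finset.sum_le_sum
  intro r _
  rw [Finset.inf'_insert (H := hA), Finset.inf'_insert (H := hB)]
  have hBA : B.inf' hB (fun s => Dplus s r) ≤ A.inf' hA (fun s => Dplus s r) := by
    apply Finset.le_inf'
    intro b hb
    exact Finset.inf'_le _ (hAB hb)
  rcases le_total (Dplus y r) (A.inf' hA (fun s => Dplus s r)) with h | h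
  · rcases le_total (Dplus y r) (B.inf' hB (fun s => Dplus s r)) with h2 | h2
    · rw [inf_eq_left.mpr h2, inf_eq_left.mpr h]
      linarith
    · rw [inf_eq_right.mpr h2, inf_eq_left.mpr h]
      linarith
  · have h2 : B.inf' hB (fun s => Dplus s r) ≤ Dplus y r := le_trans hBA h
    rw [inf_eq_right.mpr h2, inf_eq_right.mpr h]
    linarith
end

section
/- Let m be a positive integer, let R be a finite nonempty subset of ℝ^m, let A be a finite nonempty subset of ℝ^m, and let x, y ∈ ℝ^m. Then IGD(A, R) − IGD(A ∪ {x, y}, R) ≤ (IGD(A, R) − IGD(A ∪ {x}, R)) + (IGD(A, R) − IGD(A ∪ {y}, R)); i.e., the joint IGD improvement of adding x and y together is at most the sum of their individual IGD improvements. (The key inequality established inside the proof of Theorem 1.) -/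
lemma min_key (a b c : ℝ) : min a c + min b c ≤ c + min a (min b c) := by
  simp only [min_def]; split_ifs <;> linarith

/-- The key inequality inside the proof of Theorem 1: the joint IGD improvement
of adding `x` and `y` together is at most the sum of their individual IGD
improvements:
`IGD(A,R) − IGD(A ∪ {x,y},R) ≤ (IGD(A,R) − IGD(A ∪ {x},R)) + (IGD(A,R) − IGD(A ∪ {y},R))`. -/
theorem igd_joint_improvement_le (m : ℕ) (hm : 0 < m)
    (R : Finset (Fin m → ℝ)) (hR : R.Nonempty)
    (A : Finset (Fin m → ℝ)) (hA : A.Nonempty) (x y : Fin m → ℝ) :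
    IGD A hA R -
        IGD (insert x (insert y A)) (Finset.insert_nonempty x (insert y A)) R ≤
      (IGD A hA R - IGD (insert x A) (Finset.insert_nonempty x A) R) +
        (IGD A hA R - IGD (insert y A) (Finset.insert_nonempty y A) R) := by
  have key : IGD (insert x A) (Finset.insert_nonempty x A) R +
      IGD (insert y A) (Finset.insert_nonempty y A) R ≤
      IGD A hA R +
      IGD (insert x (insert y A)) (Finset.insert_nonempty x (insert y A)) R := by
    unfold IGD
    rw [← mul_add, ← mul_add]
    apply mul_le_mul_of_nonneg_left _ (by positivity)
    rw [← Finset.sum_add_distrib, ← Finset.sum_add_distrib]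
    apply Finset.sum_le_sum
    intro r _
    rw [Finset.inf'_insert, Finset.inf'_insert, Finset.inf'_insert, Finset.inf'_insert]
    exact min_key (euclDist x r) (euclDist y r) (A.inf' hA fun s => euclDist s r)
    exact Finset.insert_nonempty y A
  linarith
end

section
/- Let m be a positive integer and fix a reference point r ∈ ℝ^m. For any finite sets A ⊆ B ⊆ ℝ^m and any point p ∈ ℝ^m, HVC(p, B) ≤ HVC(p, A), i.e., HV(B ∪ {p}) − HV(B) ≤ HV(A ∪ {p}) − HV(A). In other words, the hypervolume indicator is a submodular set function. (The submodularity property of hypervolume on which the lazy greedy hypervolume subset selection algorithm LGI-HSS relies.) -/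
open MeasureTheory

/-- The hypervolume of a finite set `S ⊆ ℝ^m` with respect to a reference
point `r`. -/
noncomputable def HV {m : ℕ} (r : Fin m → ℝ) (S : Finset (Fin m → ℝ)) : ℝ :=
  (volume {z : Fin m → ℝ | ∃ s ∈ S, s ≤ z ∧ z ≤ r}).toReal

/-- The hypervolume contribution of a point `p` to a finite set `S`. -/
noncomputable def HVC {m : ℕ} (r : Fin m → ℝ) (p : Fin m → ℝ)
    (S : Finset (Fin m → ℝ)) : ℝ :=
  HV r (insert p S) - HV r S

lemma hv_set_eq {m : ℕ} (r : Fin m → ℝ) (S : Finset (Fin m → ℝ)) :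
    {z : Fin m → ℝ | ∃ s ∈ S, s ≤ z ∧ z ≤ r} = ⋃ s ∈ S, Set.Icc s r := by
  ext z; simp [Set.mem_Icc]; try tauto

lemma hv_meas {m : ℕ} (r : Fin m → ℝ) (S : Finset (Fin m → ℝ)) :
    MeasurableSet {z : Fin m → ℝ | ∃ s ∈ S, s ≤ z ∧ z ≤ r} := by
  rw [hv_set_eq]
  exact S.measurableSet_biUnion (fun s _ => measurableSet_Icc)

lemma hv_fin {m : ℕ} (r : Fin m → ℝ) (S : Finset (Fin m → ℝ)) :
    volume {z : Fin m → ℝ | ∃ s ∈ S, s ≤ z ∧ z ≤ r} ≠ ⊤ := by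
  rw [hv_set_eq]
  refine (lt_of_le_of_lt (measure_biUnion_finset_le _ _) ?_).ne
  exact ENNReal.sum_lt_top.2 fun s _ => isCompact_Icc.measure_lt_top

lemma hvc_eq {m : ℕ} (r p : Fin m → ℝ) (S : Finset (Fin m → ℝ)) :
    HVC r p S
      = (volume (Set.Icc p r \ {z | ∃ s ∈ S, s ≤ z ∧ z ≤ r})).toReal := by
  unfold HVC HV
  have h1 : {z : Fin m → ℝ | ∃ s ∈ insert p S, s ≤ z ∧ z ≤ r}
      = Set.Icc p r ∪ {z | ∃ s ∈ S, s ≤ z ∧ z ≤ r} := by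
    ext z; simp [Set.mem_Icc]; try tauto
  have h2 : Set.Icc p r ∪ {z : Fin m → ℝ | ∃ s ∈ S, s ≤ z ∧ z ≤ r}
      = (Set.Icc p r \ {z | ∃ s ∈ S, s ≤ z ∧ z ≤ r})
        ∪ {z | ∃ s ∈ S, s ≤ z ∧ z ≤ r} := by
    rw [Set.diff_union_self]
  rw [h1, h2, measure_union Set.disjoint_sdiff_left (hv_meas r S),
    ENNReal.toReal_add ?_ (hv_fin r S)]
  · ring
  · exact ((measure_mono Set.diff_subset).trans_lt
      isCompact_Icc.measure_lt_top).ne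

/-- Submodularity of the hypervolume indicator (the property on which the lazy
greedy algorithm LGI-HSS relies): for `A ⊆ B` and any `p`,
`HVC(p, B) ≤ HVC(p, A)`, i.e. `HV(B ∪ {p}) − HV(B) ≤ HV(A ∪ {p}) − HV(A)`. -/
theorem hv_submodular (m : ℕ) (hm : 0 < m) (r : Fin m → ℝ)
    (A B : Finset (Fin m → ℝ)) (hAB : A ⊆ B) (p : Fin m → ℝ) :
    HVC r p B ≤ HVC r p A := by
  rw [hvc_eq, hvc_eq]
  refine ENNReal.toReal_mono ?_ (measure_mono (Set.diff_subset_diff_right ?_))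
  · exact ((measure_mono Set.diff_subset).trans_lt
      isCompact_Icc.measure_lt_top).ne
  · intro z hz
    obtain ⟨s, hs, h⟩ := hz
    exact ⟨s, hAB hs, h⟩
end

section
/- Let m be a positive integer, fix a reference point r ∈ ℝ^m, let S ⊆ ℝ^m be finite, and let p ∈ ℝ^m satisfy p ≤ r componentwise. Define limit(s, p) ∈ ℝ^m by limit(s,p)_i = max{s_i, p_i} for each coordinate i, and let S' = { limit(s, p) | s ∈ S }. Then HVC(p, S) = HV({p}) − HV(S'); i.e., the hypervolume contribution of p to S equals the hypervolume of the single point p minus the hypervolume of the limited set S'. (Correctness of the hypervolume contribution computation method of equations (4)–(6).) -/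
open MeasureTheory

/-- The `limit` operation: `limit(s,p)ᵢ = max{sᵢ, pᵢ}` in each coordinate. -/
def limit {m : ℕ} (s p : Fin m → ℝ) : Fin m → ℝ :=
  fun i => max (s i) (p i)

/-- Correctness of the hypervolume contribution computation of equations
(4)–(6): for `p ≤ r`, `HVC(p, S) = HV({p}) − HV(S')` where
`S' = { limit(s,p) | s ∈ S }`. -/
theorem hvc_limit_formula (m : ℕ) (hm : 0 < m) (r : Fin m → ℝ)
    (S : Finset (Fin m → ℝ)) (p : Fin m → ℝ) (hpr : p ≤ r) :
    HVC r p S = HV r {p} - HV r (S.image fun s => limit s p) := by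
  classical
  set A : Set (Fin m → ℝ) := {z | ∃ s ∈ S, s ≤ z ∧ z ≤ r} with hA
  set B : Set (Fin m → ℝ) := Set.Icc p r with hB
  have hAeq : A = ⋃ s ∈ S, Set.Icc s r := by
    ext z
    simp only [hA, Set.mem_setOf_eq, Set.mem_iUnion, Set.mem_Icc]
    exact ⟨fun ⟨s, hs, h⟩ => ⟨s, hs, h⟩, fun ⟨s, hs, h⟩ => ⟨s, hs, h⟩⟩
  have hAmeas : MeasurableSet A := by
    rw [hAeq]; exact S.measurableSet_biUnion fun s _ => measurableSet_Icc
  have hAfin : volume A < ⊤ := by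
    rw [hAeq]
    refine lt_of_le_of_lt (measure_biUnion_finset_le _ _) ?_
    exact ENNReal.sum_lt_top.mpr fun s _ => isCompact_Icc.measure_lt_top
  have hBfin : volume B < ⊤ := isCompact_Icc.measure_lt_top
  have h1 : {z : Fin m → ℝ | ∃ s ∈ insert p S, s ≤ z ∧ z ≤ r} = B ∪ A := by
    ext z
    simp only [Finset.mem_insert, Set.mem_setOf_eq, Set.mem_union, hA, hB, Set.mem_Icc]
    constructor
    · rintro ⟨s, hs | hs, hsz, hzr⟩
      · exact Or.inl ⟨hs ▸ hsz, hzr⟩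
      · exact Or.inr ⟨s, hs, hsz, hzr⟩
    · rintro (⟨hpz, hzr⟩ | ⟨s, hs, hsz, hzr⟩)
      · exact ⟨p, Or.inl rfl, hpz, hzr⟩
      · exact ⟨s, Or.inr hs, hsz, hzr⟩
  have h2 : {z : Fin m → ℝ | ∃ s ∈ S.image (fun s => limit s p), s ≤ z ∧ z ≤ r}
      = B ∩ A := by
    ext z
    simp only [Set.mem_setOf_eq, Finset.mem_image, Set.mem_inter_iff, hA, hB, Set.mem_Icc]
    constructor
    · rintro ⟨_, ⟨s, hs, rfl⟩, hle, hzr⟩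
      have hsz : s ≤ z := fun i => le_trans (le_max_left _ _) (hle i)
      have hpz : p ≤ z := fun i => le_trans (le_max_right _ _) (hle i)
      exact ⟨⟨hpz, hzr⟩, s, hs, hsz, hzr⟩
    · rintro ⟨⟨hpz, hzr⟩, s, hs, hsz, _⟩
      exact ⟨limit s p, ⟨s, hs, rfl⟩, fun i => max_le (hsz i) (hpz i), hzr⟩
  have hBset : {z : Fin m → ℝ | ∃ s ∈ ({p} : Finset (Fin m → ℝ)), s ≤ z ∧ z ≤ r} = B := by
    ext z; simp [hB, Set.mem_Icc]
  have key : volume (B ∪ A) + volume (B ∩ A) = volume B + volume A :=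
    measure_union_add_inter B hAmeas
  unfold HVC HV
  rw [h1, h2, hBset]
  have hUfin : volume (B ∪ A) < ⊤ :=
    lt_of_le_of_lt (measure_union_le _ _) (ENNReal.add_lt_top.mpr ⟨hBfin, hAfin⟩)
  have hIfin : volume (B ∩ A) < ⊤ :=
    lt_of_le_of_lt (measure_mono Set.inter_subset_left) hBfin
  have hkey : (volume (B ∪ A)).toReal + (volume (B ∩ A)).toReal
      = (volume B).toReal + (volume A).toReal := by
    rw [← ENNReal.toReal_add hUfin.ne hIfin.ne, ← ENNReal.toReal_add hBfin.ne hAfin.ne, key]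
  linarith
end

section
/- Let m be a positive integer, let R be a finite nonempty subset of ℝ^m, and let A, B be finite nonempty subsets of ℝ^m such that for every b ∈ B there exists a ∈ A with a ⪯ b (a weakly dominates b). Then IGD⁺(A, R) ≤ IGD⁺(B, R); i.e., the IGD+ indicator is weakly Pareto compliant: a solution set that is better than another (in the sense of weak dominance coverage) never has a worse IGD+ value. -/
lemma Dplus_mono {m : ℕ} {a b : Fin m → ℝ} (h : ∀ i, a i ≤ b i) (r : Fin m → ℝ) :
    Dplus a r ≤ Dplus b r := by
  apply Real.sqrt_le_sqrt
  apply Finset.sum_le_sum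
  intro i _
  have h1 : max 0 (a i - r i) ≤ max 0 (b i - r i) :=
    max_le_max le_rfl (by linarith [h i])
  have h0 : (0:ℝ) ≤ max 0 (a i - r i) := le_max_left _ _
  exact pow_le_pow_left₀ h0 h1 2

/-- The IGD+ indicator is weakly Pareto compliant: if every `b ∈ B` is weakly
dominated by some `a ∈ A` (i.e. `aᵢ ≤ bᵢ` for all `i`), then
`IGD⁺(A, R) ≤ IGD⁺(B, R)`. -/
theorem igdplus_weakly_pareto_compliant (m : ℕ) (hm : 0 < m)
    (R : Finset (Fin m → ℝ)) (hR : R.Nonempty)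
    (A B : Finset (Fin m → ℝ)) (hA : A.Nonempty) (hB : B.Nonempty)
    (hdom : ∀ b ∈ B, ∃ a ∈ A, ∀ i, a i ≤ b i) :
    IGDplus A hA R ≤ IGDplus B hB R := by
  unfold IGDplus
  apply mul_le_mul_of_nonneg_left _ (by positivity)
  apply Finset.sum_le_sum
  intro r _
  rw [Finset.le_inf'_iff]
  intro b hb
  obtain ⟨a, haA, hab⟩ := hdom b hb
  exact le_trans (Finset.inf'_le _ haA) (Dplus_mono hab r)
end

section
/- Let V be a finite set and let g be a submodular set function on subsets of V. Let S ⊆ V be the currently selected set and p ∈ V \ S. Suppose that for every q ∈ V \ S with q ≠ p there is a set S_q ⊆ S such that g(S ∪ {p}) − g(S) ≥ g(S_q ∪ {q}) − g(S_q) (the recomputed marginal gain of p is at least the cached tentative gain of q, computed with respect to an earlier, smaller selected set). Then g(S ∪ {p}) − g(S) ≥ g(S ∪ {q}) − g(S) for every q ∈ V \ S; i.e., p truly maximizes the marginal gain, so the lazy evaluation mechanism selects the same element as the standard greedy inclusion algorithm. -/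
/-- Correctness of the lazy evaluation mechanism: let `g` be a submodular set
function on subsets of a finite set `V`, let `S ⊆ V` be the currently selected
set and `p ∈ V \ S`. If for every other candidate `q ∈ V \ S` there is a set
`S_q ⊆ S` (an earlier, smaller selected set) with
`g(S ∪ {p}) − g(S) ≥ g(S_q ∪ {q}) − g(S_q)` (the recomputed marginal gain of
`p` is at least the cached tentative gain of `q`), then `p` truly maximizes
the marginal gain: `g(S ∪ {p}) − g(S) ≥ g(S ∪ {q}) − g(S)` for every
`q ∈ V \ S`. -/
theorem lazy_greedy_selects_max {α : Type*} [DecidableEq α]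
    (V : Finset α) (g : Finset α → ℝ)
    (hsub : ∀ A B : Finset α, A ⊆ B → B ⊆ V → ∀ p ∈ V, p ∉ B →
      g (insert p B) - g B ≤ g (insert p A) - g A)
    (S : Finset α) (hS : S ⊆ V) (p : α) (hp : p ∈ V \ S)
    (hlazy : ∀ q ∈ V \ S, q ≠ p →
      ∃ Sq ⊆ S, g (insert q Sq) - g Sq ≤ g (insert p S) - g S) :
    ∀ q ∈ V \ S, g (insert q S) - g S ≤ g (insert p S) - g S := by
  intro q hq
  rcases Finset.mem_sdiff.mp hq with ⟨hqV, hqS⟩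
  by_cases hqp : q = p
  · subst hqp; exact le_refl _
  · obtain ⟨Sq, hSq, hle⟩ := hlazy q hq hqp
    calc g (insert q S) - g S ≤ g (insert q Sq) - g Sq :=
          hsub Sq S hSq hS q hqV hqS
      _ ≤ g (insert p S) - g S := hle
end

section
/- Let V be a finite set and let g be a submodular, non-decreasing set function on subsets of V with g(∅) = 0. Let k be a positive integer with k ≤ |V|, and let ∅ = S_0 ⊆ S_1 ⊆ … ⊆ S_k be a greedy chain, i.e., for each i < k, S_{i+1} = S_i ∪ {p_i} where p_i ∈ V \ S_i satisfies g(S_i ∪ {p_i}) − g(S_i) ≥ g(S_i ∪ {q}) − g(S_i) for all q ∈ V \ S_i. Then for every T ⊆ V with |T| ≤ k, g(S_k) ≥ (1 − (1 − 1/k)^k) · g(T); in particular g(S_k) ≥ (1 − 1/e) · g(T). (The greedy (1 − 1/e)-approximation guarantee invoked for hypervolume, IGD and IGD+ greedy subset selection.) -/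
/-- The greedy `(1 − 1/e)`-approximation guarantee (Nemhauser–Wolsey–Fisher)
invoked for hypervolume, IGD and IGD+ greedy subset selection: let `g` be a
submodular, non-decreasing set function on subsets of a finite set `V` with
`g(∅) = 0`, let `0 < k ≤ |V|`, and let `∅ = S 0 ⊆ S 1 ⊆ … ⊆ S k` be a greedy
chain, where at step `i < k` an element `p ∈ V \ S i` maximizing the marginal
gain is added. Then for every `T ⊆ V` with `|T| ≤ k`,
`g(S k) ≥ (1 − (1 − 1/k)^k) · g(T)`, and in particular
`g(S k) ≥ (1 − 1/e) · g(T)`. -/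
theorem greedy_submodular_approximation {α : Type*} [DecidableEq α]
    (V : Finset α) (g : Finset α → ℝ)
    (hsub : ∀ A B : Finset α, A ⊆ B → B ⊆ V → ∀ p ∈ V, p ∉ B →
      g (insert p B) - g B ≤ g (insert p A) - g A)
    (hmono : ∀ A B : Finset α, A ⊆ B → B ⊆ V → g A ≤ g B)
    (hempty : g ∅ = 0)
    (k : ℕ) (hk : 0 < k) (hkV : k ≤ V.card)
    (S : ℕ → Finset α) (hS0 : S 0 = ∅)
    (hgreedy : ∀ i < k, ∃ p ∈ V \ S i, S (i + 1) = insert p (S i) ∧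
      ∀ q ∈ V \ S i,
        g (insert q (S i)) - g (S i) ≤ g (insert p (S i)) - g (S i)) :
    ∀ T ⊆ V, T.card ≤ k →
      (1 - (1 - 1 / (k : ℝ)) ^ k) * g T ≤ g (S k) ∧
        (1 - 1 / Real.exp 1) * g T ≤ g (S k) := by
  intro T hTV hTk
  have kr1 : (1:ℝ) ≤ (k:ℝ) := by exact_mod_cast hk
  have krpos : (0:ℝ) < (k:ℝ) := by linarith
  have hSV : ∀ i, i ≤ k → S i ⊆ V := by
    intro i
    induction i with
    | zero => intro _; simp [hS0]
    | succ n ih =>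
      intro hn
      obtain ⟨p, hp, hSn, _⟩ := hgreedy n (by omega)
      rw [hSn]
      exact Finset.insert_subset (Finset.mem_sdiff.mp hp).1 (ih (by omega))
  have hgT0 : 0 ≤ g T := by
    have := hmono ∅ T (Finset.empty_subset T) hTV
    rw [hempty] at this; exact this
  -- telescoping lemma
  have tel : ∀ F : Finset α, F ⊆ V → ∀ A : Finset α, A ⊆ V →
      g (A ∪ F) ≤ g A + ∑ q ∈ F, (g (insert q A) - g A) := by
    intro F
    induction F using Finset.induction with
    | empty => intro _ A _; simp
    | @insert a F' ha ih =>
      intro hFV A hAV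
      have haV : a ∈ V := hFV (Finset.mem_insert_self a F')
      have hF'V : F' ⊆ V := (Finset.subset_insert a F').trans hFV
      have hIH := ih hF'V A hAV
      have hAF'V : A ∪ F' ⊆ V := Finset.union_subset hAV hF'V
      rw [Finset.sum_insert ha]
      have hterm0 : 0 ≤ g (insert a A) - g A := by
        have := hmono A (insert a A) (Finset.subset_insert a A)
          (Finset.insert_subset haV hAV)
        linarith
      by_cases hmem : a ∈ A ∪ F'
      · have : A ∪ insert a F' = A ∪ F' := by
          rw [Finset.union_insert, Finset.insert_eq_self.mpr hmem]
        rw [this]; linarith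
      · have heq : A ∪ insert a F' = insert a (A ∪ F') := by
          rw [Finset.union_insert]
        rw [heq]
        have := hsub A (A ∪ F') Finset.subset_union_left hAF'V a haV hmem
        linarith
  -- greedy step inequality
  have step : ∀ i, i < k → g T - g (S i) ≤ (k:ℝ) * (g (S (i+1)) - g (S i)) := by
    intro i hi
    obtain ⟨p, hp, hSi1, hmax⟩ := hgreedy i hi
    have hSiV : S i ⊆ V := hSV i (by omega)
    have hpV : p ∈ V := (Finset.mem_sdiff.mp hp).1
    have hSi1V : insert p (S i) ⊆ V := Finset.insert_subset hpV hSiV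
    set δ := g (S (i+1)) - g (S i) with hδ
    have hδ0 : 0 ≤ δ := by
      have := hmono (S i) (insert p (S i)) (Finset.subset_insert p (S i)) hSi1V
      rw [hδ, hSi1]; linarith
    have h1 : g T ≤ g (S i ∪ T) :=
      hmono T (S i ∪ T) Finset.subset_union_right (Finset.union_subset hSiV hTV)
    have h2 := tel T hTV (S i) hSiV
    have h3 : ∑ q ∈ T, (g (insert q (S i)) - g (S i)) ≤ (T.card : ℝ) * δ := by
      have hb : ∀ q ∈ T, g (insert q (S i)) - g (S i) ≤ δ := by
        intro q hq
        by_cases hqS : q ∈ S i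
        · rw [Finset.insert_eq_self.mpr hqS]; simpa using hδ0
        · have hq' : q ∈ V \ S i := Finset.mem_sdiff.mpr ⟨hTV hq, hqS⟩
          have := hmax q hq'
          rw [hδ, hSi1]; exact this
      have := Finset.sum_le_card_nsmul T _ δ hb
      simpa [nsmul_eq_mul] using this
    have h4 : (T.card : ℝ) * δ ≤ (k:ℝ) * δ := by
      apply mul_le_mul_of_nonneg_right _ hδ0
      exact_mod_cast hTk
    linarith
  -- main induction
  have key : ∀ i, i ≤ k → g T - g (S i) ≤ (1 - 1/(k:ℝ)) ^ i * g T := by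
    intro i
    induction i with
    | zero => intro _; simp [hS0, hempty]
    | succ n ih =>
      intro hn
      have hn' : n < k := by omega
      have hIH := ih (by omega)
      have hstep := step n hn'
      have hfac : (0:ℝ) ≤ 1 - 1/(k:ℝ) := by
        have : 1/(k:ℝ) ≤ 1 := by
          rw [div_le_one krpos]; exact kr1
        linarith
      have h1 : g T - g (S (n+1)) ≤ (1 - 1/(k:ℝ)) * (g T - g (S n)) := by
        have hd : (g T - g (S n)) / (k:ℝ) ≤ g (S (n+1)) - g (S n) := by
          rw [div_le_iff₀ krpos]; linarith
        have heq : (1 - 1/(k:ℝ)) * (g T - g (S n)) =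
            (g T - g (S n)) - (g T - g (S n)) / (k:ℝ) := by
          field_simp
        rw [heq]; linarith
      calc g T - g (S (n+1)) ≤ (1 - 1/(k:ℝ)) * (g T - g (S n)) := h1
        _ ≤ (1 - 1/(k:ℝ)) * ((1 - 1/(k:ℝ)) ^ n * g T) :=
            mul_le_mul_of_nonneg_left hIH hfac
        _ = (1 - 1/(k:ℝ)) ^ (n+1) * g T := by ring
  have hkey := key k le_rfl
  constructor
  · linarith
  · have hfac : (0:ℝ) ≤ 1 - 1/(k:ℝ) := by
      have : 1/(k:ℝ) ≤ 1 := by rw [div_le_one krpos]; exact kr1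
      linarith
    have h1 : (1 - 1/(k:ℝ)) ≤ Real.exp (-(1/(k:ℝ))) := by
      have := Real.add_one_le_exp (-(1/(k:ℝ)))
      linarith
    have h2 : (1 - 1/(k:ℝ)) ^ k ≤ Real.exp (-(1/(k:ℝ))) ^ k :=
      pow_le_pow_left₀ hfac h1 k
    have h3 : Real.exp (-(1/(k:ℝ))) ^ k = Real.exp (-1) := by
      rw [← Real.exp_nat_mul]
      congr 1
      field_simp
    have h4 : (1 - 1/(k:ℝ)) ^ k ≤ 1 / Real.exp 1 := by
      rw [h3, Real.exp_neg, ← one_div] at h2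
      exact h2
    have h5 : (1 - 1 / Real.exp 1) * g T ≤ (1 - (1 - 1/(k:ℝ)) ^ k) * g T := by
      apply mul_le_mul_of_nonneg_right _ hgT0
      linarith
    linarith
end
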